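/- For every alphabet Σ and all w, a ∈ ℕ⁺, the (a+1)-ary relation R̃_∈(Σ,w,a) = {(D, s₁,…,sₐ) : D ∈ B⊕(Σ,w), s₁,…,sₐ ∈ L(D)} is regular. -/

import Mathlib

open FirstOrder

/-- A language (set of strings) is regular if it is recognized by a
deterministic finite automaton with finitely many states. -/
def LangRegular {β : Type} (L : Set (List β)) : Prop :=
  Language.IsRegular (L : Language β)

/-- A `(Σ,w)`-layer: left/right frontiers contained in `{0,…,w−1}`, a set of
transitions labelled by symbols of `Σ` or the padding symbol (`none`), sets of
initial and final states, and two boolean flags. -/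
structure Layer (σ : Type) (w : ℕ) where
  left : Set (Fin w)
  right : Set (Fin w)
  trans : Set (Fin w × Option σ × Fin w)
  initial : Set (Fin w)
  final : Set (Fin w)
  ini : Bool
  fin : Bool
  trans_mem : ∀ t ∈ trans, t.1 ∈ left ∧ t.2.2 ∈ right
  initial_sub : initial ⊆ left
  final_sub : final ⊆ right
  initial_empty : ini = false → initial = ∅
  final_empty : fin = false → final = ∅

instance {σ : Type} {w : ℕ} : Inhabited (Layer σ w) :=
  ⟨{ left := ∅, right := ∅, trans := ∅, initial := ∅, final := ∅,
     ini := false, fin := false,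
     trans_mem := by simp, initial_sub := by simp, final_sub := by simp,
     initial_empty := fun _ => rfl, final_empty := fun _ => rfl }⟩

/-- A string of layers is a `(Σ,w)`-ODD: it is non-empty, consecutive frontiers
match, the initial flag is set exactly on the first layer, and the final flag is
set exactly on the last layer. -/
def IsODD {σ : Type} {w : ℕ} (D : List (Layer σ w)) : Prop :=
  D ≠ [] ∧
  (∀ i : ℕ, (h : i + 1 < D.length) →
    (D[i + 1]'h).left = (D[i]'(by omega)).right) ∧
  (∀ i : ℕ, (h : i < D.length) →
    ((D[i]'h).ini = true ↔ i = 0) ∧ ((D[i]'h).fin = true ↔ i = D.length - 1))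

/-- Acceptance of a (non-empty) string `s` of length at most `|D|` by the ODD `D`:
there is a sequence of compatible transitions, reading the symbols of `s` followed
by padding symbols, from an initial state of the first layer to a final state of
the last layer. -/
def OddAccepts {σ : Type} {w : ℕ} (D : List (Layer σ w)) (s : List σ) : Prop :=
  s ≠ [] ∧ s.length ≤ D.length ∧
  ∃ st : ℕ → Fin w,
    (∀ i : ℕ, (h : i < D.length) → (st i, s[i]?, st (i + 1)) ∈ (D[i]'h).trans) ∧
    ∀ h : 0 < D.length,
      st 0 ∈ (D[0]'h).initial ∧ st D.length ∈ (D[D.length - 1]'(by omega)).final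

/-- The language of an ODD. -/
def OddLang {σ : Type} {w : ℕ} (D : List (Layer σ w)) : Set (List σ) :=
  { s | OddAccepts D s }

/-- Convolution (tensor product) of a family of strings over (possibly different)
alphabets: the string of length `max_i |u_i|` whose `j`-th symbol has `i`-th
component the `j`-th symbol of `u_i` if `j < |u_i|`, and the padding symbol `none`
otherwise. -/
def convD {a : ℕ} {α : Fin a → Type} (us : ∀ i, List (α i)) :
    List (∀ i, Option (α i)) :=
  List.ofFn fun j : Fin (Finset.univ.sup fun i => (us i).length) =>
    fun i => (us i)[(j : ℕ)]?

/-- A relation of tuples of strings is regular if its associated language, the set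
of convolutions of its tuples, is a regular language. -/
def RegularRelD {a : ℕ} {α : Fin a → Type} (R : Set (∀ i, List (α i))) : Prop :=
  LangRegular { x | ∃ us ∈ R, convD us = x }

/-- Convolution of a pair of strings over two alphabets. -/
def conv2 {α β : Type} (u : List α) (v : List β) : List (Option α × Option β) :=
  List.ofFn fun j : Fin (max u.length v.length) => (u[(j : ℕ)]?, v[(j : ℕ)]?)

/-- A binary relation of strings is regular if its associated language is regular. -/
def Regular2 {α β : Type} (R : Set (List α × List β)) : Prop :=
  LangRegular { x | ∃ p ∈ R, conv2 p.1 p.2 = x }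

/-- Convolution of an `(a+1)`-tuple of strings `(u, v₁, …, vₐ)` where `u` is over
the alphabet `α` and the `v`s over the alphabet `β`. -/
def conv1a {α β : Type} {a : ℕ} (u : List α) (vs : Fin a → List β) :
    List (Option α × (Fin a → Option β)) :=
  List.ofFn fun j : Fin (max u.length (Finset.univ.sup fun i => (vs i).length)) =>
    (u[(j : ℕ)]?, fun i => (vs i)[(j : ℕ)]?)

/-- An `(a+1)`-ary relation whose first coordinate is a string over `α` and whose
remaining `a` coordinates are strings over `β` is regular if its associated
language of convolutions is regular. -/
def Regular1a {α β : Type} {a : ℕ} (R : Set (List α × (Fin a → List β))) : Prop :=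
  LangRegular { x | ∃ p ∈ R, conv1a p.1 p.2 = x }

/-- The `a`-fold tensor product `L^{⊗a}` of a language `L`. -/
def tensorLang {σ : Type} {a : ℕ} (L : Set (List σ)) :
    Set (List (Fin a → Option σ)) :=
  { x | ∃ us : Fin a → List σ, (∀ i, us i ∈ L) ∧ convD us = x }

/-- The purely relational first-order vocabulary with `r` relation symbols of
arities `ar 0, …, ar (r-1)`. -/
def vocLang (r : ℕ) (ar : Fin r → ℕ) : FirstOrder.Language :=
  { Functions := fun _ => Empty, Relations := fun n => { i : Fin r // ar i = n } }

/-- A tuple `(D₀, D₁, …, Dᵣ)` is `(Σ,w,τ)`-structural: all ODDs have a common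
length, `D₀` is over `Σ`, `Dᵢ` is over `Σ^{⊗aᵢ}` (with padding components), and
`L(Dᵢ) ⊆ L(D₀)^{⊗aᵢ}`. -/
def IsStructural {σ : Type} {w r : ℕ} {ar : Fin r → ℕ}
    (D₀ : List (Layer σ w))
    (Ds : ∀ i : Fin r, List (Layer (Fin (ar i) → Option σ) w)) : Prop :=
  IsODD D₀ ∧
  ∀ i : Fin r, IsODD (Ds i) ∧ (Ds i).length = D₀.length ∧
    OddLang (Ds i) ⊆ tensorLang (OddLang D₀)

/-- The `τ`-structure derived from a structural tuple: its domain is `L(D₀)` and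
the `i`-th relation holds of `(u₁,…,u_{aᵢ})` iff `u₁⊗⋯⊗u_{aᵢ} ∈ L(Dᵢ)`. -/
def derivedStr {σ : Type} {w r : ℕ} {ar : Fin r → ℕ}
    (D₀ : List (Layer σ w))
    (Ds : ∀ i : Fin r, List (Layer (Fin (ar i) → Option σ) w)) :
    (vocLang r ar).Structure { s : List σ // s ∈ OddLang D₀ } where
  funMap := fun f _ => f.elim
  RelMap := fun {n} Rl x =>
    match Rl with
    | ⟨i, h⟩ =>
      convD (fun m : Fin (ar i) => (x (Fin.cast h m)).val) ∈ OddLang (Ds i)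

/-- The type of `(r+1)`-tuples of ODDs `(D₀, D₁, …, Dᵣ)`. -/
def StructTuple (σ : Type) (w r : ℕ) (ar : Fin r → ℕ) : Type :=
  List (Layer σ w) × ((i : Fin r) → List (Layer (Fin (ar i) → Option σ) w))

/-- Convolution of an `(r+1)`-tuple of ODDs. -/
def convTuple {σ : Type} {w r : ℕ} {ar : Fin r → ℕ} (q : StructTuple σ w r ar) :
    List (Option (Layer σ w) ×
      ((i : Fin r) → Option (Layer (Fin (ar i) → Option σ) w))) :=
  List.ofFn fun j : Fin (max q.1.length (Finset.univ.sup fun i => (q.2 i).length)) =>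
    (q.1[(j : ℕ)]?, fun i => (q.2 i)[(j : ℕ)]?)

/-- A set of `(r+1)`-tuples of ODDs is regular if its associated language of
convolutions is regular. -/
def RegularTuple {σ : Type} {w r : ℕ} {ar : Fin r → ℕ}
    (R : Set (StructTuple σ w r ar)) : Prop :=
  LangRegular { x | ∃ q ∈ R, convTuple q = x }

/-- The type of `(r+1+p)`-tuples `(D₀, D₁, …, Dᵣ, v₁, …, v_p)`. -/
def StructTupleV (σ : Type) (w r : ℕ) (ar : Fin r → ℕ) (p : ℕ) : Type :=
  StructTuple σ w r ar × (Fin p → List σ)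

/-- Convolution of an `(r+1+p)`-tuple `(D₀, D₁, …, Dᵣ, v₁, …, v_p)`. -/
def convStruct {σ : Type} {w r : ℕ} {ar : Fin r → ℕ} {p : ℕ}
    (q : StructTupleV σ w r ar p) :
    List ((Option (Layer σ w) ×
        ((i : Fin r) → Option (Layer (Fin (ar i) → Option σ) w))) ×
      (Fin p → Option σ)) :=
  List.ofFn fun j : Fin (max (max q.1.1.length
      (Finset.univ.sup fun i => (q.1.2 i).length))
      (Finset.univ.sup fun t => (q.2 t).length)) =>
    ((q.1.1[(j : ℕ)]?, fun i => (q.1.2 i)[(j : ℕ)]?), fun t => (q.2 t)[(j : ℕ)]?)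

/-- A set of `(r+1+p)`-tuples is regular if its associated language of
convolutions is regular. -/
def RegularStruct {σ : Type} {w r : ℕ} {ar : Fin r → ℕ} {p : ℕ}
    (R : Set (StructTupleV σ w r ar p)) : Prop :=
  LangRegular { x | ∃ q ∈ R, convStruct q = x }


/-! ### Auxiliary development for `stmt11` -/

section OddDFAProof

variable {σ : Type} {w a : ℕ}

/-- Alphabet of the convolution language. -/
abbrev OSym (σ : Type) (w a : ℕ) : Type := Option (Layer σ w) × (Fin a → Option σ)

/-- States of the DFA. -/
abbrev OSt (w a : ℕ) : Type :=
  Option (Option (Set (Fin w) × Bool × Set (Fin w) × (Fin a → Set (Fin w)) × (Fin a → Bool)))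

open Classical in
/-- Transition function. -/
noncomputable def oddStep (σ : Type) (w a : ℕ) : OSt w a → OSym σ w a → OSt w a :=
  fun s b =>
    match b.1 with
    | none => none
    | some L =>
      match s with
      | none => none
      | some none =>
        if L.ini = true ∧ (∀ i, b.2 i ≠ none) then
          some (some (L.right, L.fin, L.final,
            fun i => {q | ∃ p ∈ L.initial, (p, b.2 i, q) ∈ L.trans},
            fun i => decide (b.2 i = none)))
        else none
      | some (some st) =>
        if st.2.1 = false ∧ L.left = st.1 ∧ L.ini = false ∧
            (∀ i, st.2.2.2.2 i = true → b.2 i = none) then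
          some (some (L.right, L.fin, L.final,
            fun i => {q | ∃ p ∈ st.2.2.2.1 i, (p, b.2 i, q) ∈ L.trans},
            fun i => decide (b.2 i = none)))
        else none

/-- Accepting states. -/
def oddAcc (w a : ℕ) : OSt w a → Prop :=
  fun s =>
    match s with
    | some (some st) => st.2.1 = true ∧ ∀ i, ∃ q ∈ st.2.2.2.1 i, q ∈ st.2.2.1
    | _ => False

/-- The DFA. -/
noncomputable def oddM (σ : Type) (w a : ℕ) : DFA (OSym σ w a) (OSt w a) :=
  ⟨oddStep σ w a, some none, setOf (oddAcc w a)⟩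

/-- The layer at position `j` of a word. -/
def layAt (x : List (OSym σ w a)) (j : ℕ) : Layer σ w := ((x[j]?).getD default).1.iget

/-- The `i`-th string symbol at position `j` of a word. -/
def symAt (x : List (OSym σ w a)) (j : ℕ) (i : Fin a) : Option σ := ((x[j]?).getD default).2 i

/-- Structural well-formedness of a word. -/
def GoodW (x : List (OSym σ w a)) : Prop :=
  (∀ j, j < x.length → ((x[j]?).getD default).1 ≠ none) ∧
  (∀ j, j < x.length → ((layAt x j).ini = true ↔ j = 0)) ∧
  (∀ j, j + 1 < x.length → (layAt x j).fin = false) ∧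
  (∀ j, j + 1 < x.length → (layAt x (j + 1)).left = (layAt x j).right) ∧
  (∀ i, symAt x 0 i ≠ none) ∧
  (∀ i j, j + 1 < x.length → symAt x j i = none → symAt x (j + 1) i = none)

/-- Reachable states for the `i`-th string after reading the whole word. -/
def ReachW (x : List (OSym σ w a)) (i : Fin a) : Set (Fin w) :=
  {q | ∃ st : ℕ → Fin w, st x.length = q ∧ st 0 ∈ (layAt x 0).initial ∧
        ∀ j, j < x.length → (st j, symAt x j i, st (j + 1)) ∈ (layAt x j).trans}

open Classical in
/-- Intended state after reading a good word. -/
noncomputable def stW (x : List (OSym σ w a)) : OSt w a :=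
  some (some ((layAt x (x.length - 1)).right, (layAt x (x.length - 1)).fin,
    (layAt x (x.length - 1)).final, fun i => ReachW x i,
    fun i => decide (symAt x (x.length - 1) i = none)))

theorem layAt_append (y : List (OSym σ w a)) (b : OSym σ w a) (j : ℕ) (h : j < y.length) :
    layAt (y ++ [b]) j = layAt y j := by
  simp [layAt, List.getElem?_append_left h]

theorem symAt_append (y : List (OSym σ w a)) (b : OSym σ w a) (j : ℕ) (h : j < y.length) (i : Fin a) :
    symAt (y ++ [b]) j i = symAt y j i := by
  simp [symAt, List.getElem?_append_left h]

theorem layAt_last (y : List (OSym σ w a)) (b : OSym σ w a) :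
    layAt (y ++ [b]) y.length = b.1.iget := by
  simp [layAt]

theorem symAt_last (y : List (OSym σ w a)) (b : OSym σ w a) (i : Fin a) :
    symAt (y ++ [b]) y.length i = b.2 i := by
  simp [symAt]

/-- The guard relating a good word to a new layer. -/
def GuardW (y : List (OSym σ w a)) (b : OSym σ w a) (L : Layer σ w) : Prop :=
  (layAt y (y.length - 1)).fin = false ∧ L.left = (layAt y (y.length - 1)).right ∧
    L.ini = false ∧ ∀ i, symAt y (y.length - 1) i = none → b.2 i = none

theorem good_snoc_mp (y : List (OSym σ w a)) (b : OSym σ w a) (hy : y ≠ [])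
    (hg : GoodW (y ++ [b])) :
    GoodW y ∧ ∃ L, b.1 = some L ∧ GuardW y b L := by
  obtain ⟨h1, h2, h3, h4, h5, h6⟩ := hg
  have hyl : 0 < y.length := List.length_pos_iff.mpr hy
  have hlen : (y ++ [b]).length = y.length + 1 := by simp
  rw [hlen] at h1 h2 h3 h4 h6
  have hgy : GoodW y := by
    refine ⟨?_, ?_, ?_, ?_, ?_, ?_⟩
    · intro j hj
      have := h1 j (by omega)
      rwa [List.getElem?_append_left hj] at this
    · intro j hj
      have := h2 j (by omega)
      rwa [layAt_append y b j hj] at this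
    · intro j hj
      have := h3 j (by omega)
      rwa [layAt_append y b j (by omega)] at this
    · intro j hj
      have := h4 j (by omega)
      rwa [layAt_append y b (j + 1) hj, layAt_append y b j (by omega)] at this
    · intro i
      have := h5 i
      rwa [symAt_append y b 0 hyl] at this
    · intro i j hj hnone
      have := h6 i j (by omega)
      rw [symAt_append y b j (by omega), symAt_append y b (j + 1) hj] at this
      exact this hnone
  have hb1 : b.1 ≠ none := by
    have := h1 y.length (by omega)
    rwa [List.getElem?_concat_length] at this
  obtain ⟨L, hL⟩ : ∃ L, b.1 = some L := by
    cases hb : b.1 with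
    | none => exact absurd hb hb1
    | some L => exact ⟨L, rfl⟩
  have he : y.length - 1 + 1 = y.length := by omega
  have hLlast : layAt (y ++ [b]) y.length = L := by rw [layAt_last, hL]
  refine ⟨hgy, L, hL, ?_, ?_, ?_, ?_⟩
  · have := h3 (y.length - 1) (by omega)
    rwa [layAt_append y b (y.length - 1) (by omega)] at this
  · have := h4 (y.length - 1) (by omega)
    rwa [he, hLlast, layAt_append y b (y.length - 1) (by omega)] at this
  · have h2' := h2 y.length (by omega)
    rw [hLlast] at h2'
    cases hLi : L.ini
    · rfl
    · exact absurd (h2'.mp hLi) (by omega)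
  · intro i hnone
    have := h6 i (y.length - 1) (by omega)
    rw [he, symAt_append y b (y.length - 1) (by omega), symAt_last] at this
    exact this hnone

theorem good_snoc_mpr (y : List (OSym σ w a)) (b : OSym σ w a) (L : Layer σ w) (hy : y ≠ [])
    (hgy : GoodW y) (hb : b.1 = some L) (hG : GuardW y b L) : GoodW (y ++ [b]) := by
  obtain ⟨h1, h2, h3, h4, h5, h6⟩ := hgy
  obtain ⟨g1, g2, g3, g4⟩ := hG
  have hyl : 0 < y.length := List.length_pos_iff.mpr hy
  have hlen : (y ++ [b]).length = y.length + 1 := by simp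
  have hLlast : layAt (y ++ [b]) y.length = L := by rw [layAt_last, hb]
  rw [GoodW, hlen]
  refine ⟨?_, ?_, ?_, ?_, ?_, ?_⟩
  · intro j hj
    rcases Nat.lt_or_ge j y.length with hlt | hge
    · rw [List.getElem?_append_left hlt]; exact h1 j hlt
    · have : j = y.length := by omega
      subst this
      rw [List.getElem?_concat_length]
      simp [hb]
  · intro j hj
    rcases Nat.lt_or_ge j y.length with hlt | hge
    · rw [layAt_append y b j hlt]; exact h2 j hlt
    · have : j = y.length := by omega
      subst this
      rw [hLlast]
      simp [g3, Nat.pos_iff_ne_zero.mp hyl]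
  · intro j hj
    rcases Nat.lt_or_ge (j + 1) y.length with hlt | hge
    · rw [layAt_append y b j (by omega)]; exact h3 j hlt
    · have hje : j = y.length - 1 := by omega
      rw [layAt_append y b j (by omega), hje]
      exact g1
  · intro j hj
    rcases Nat.lt_or_ge (j + 1) y.length with hlt | hge
    · rw [layAt_append y b (j + 1) hlt, layAt_append y b j (by omega)]
      exact h4 j hlt
    · have hje : j + 1 = y.length := by omega
      rw [hje, hLlast, layAt_append y b j (by omega), show j = y.length - 1 by omega]
      exact g2
  · intro i
    rw [symAt_append y b 0 hyl]
    exact h5 i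
  · intro i j hj hnone
    rcases Nat.lt_or_ge (j + 1) y.length with hlt | hge
    · rw [symAt_append y b j (by omega)] at hnone
      rw [symAt_append y b (j + 1) hlt]
      exact h6 i j hlt hnone
    · have hje : j + 1 = y.length := by omega
      rw [symAt_append y b j (by omega)] at hnone
      rw [hje, symAt_last]
      apply g4
      rw [show y.length - 1 = j by omega]
      exact hnone

theorem reach_snoc (y : List (OSym σ w a)) (b : OSym σ w a) (L : Layer σ w) (hy : y ≠ [])
    (hb : b.1 = some L) (i : Fin a) :
    ReachW (y ++ [b]) i = {q | ∃ p ∈ ReachW y i, (p, b.2 i, q) ∈ L.trans} := by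
  have hyl : 0 < y.length := List.length_pos_iff.mpr hy
  have hlen : (y ++ [b]).length = y.length + 1 := by simp
  have hLlast : layAt (y ++ [b]) y.length = L := by rw [layAt_last, hb]
  ext q
  simp only [ReachW, Set.mem_setOf_eq, hlen]
  constructor
  · rintro ⟨st, hq, h0, htr⟩
    refine ⟨st y.length, ⟨st, rfl, ?_, ?_⟩, ?_⟩
    · rwa [layAt_append y b 0 hyl] at h0
    · intro j hj
      have := htr j (by omega)
      rwa [layAt_append y b j hj, symAt_append y b j hj] at this
    · have := htr y.length (by omega)
      rwa [hLlast, symAt_last, hq] at this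
  · rintro ⟨p, ⟨st, hp, h0, htr⟩, htrans⟩
    refine ⟨Function.update st (y.length + 1) q, ?_, ?_, ?_⟩
    · simp
    · rw [Function.update_of_ne (by omega)]
      rwa [layAt_append y b 0 hyl]
    · intro j hj
      rcases Nat.lt_or_ge j y.length with hlt | hge
      · rw [Function.update_of_ne (by omega : j ≠ y.length + 1),
          Function.update_of_ne (by omega : j + 1 ≠ y.length + 1),
          layAt_append y b j hlt, symAt_append y b j hlt]
        exact htr j hlt
      · have hje : j = y.length := by omega
        subst hje
        rw [Function.update_of_ne (by omega : y.length ≠ y.length + 1), Function.update_self,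
          hLlast, symAt_last, hp]
        exact htrans

open Classical in
theorem oddStep_start (L : Layer σ w) (f : Fin a → Option σ) :
    oddStep σ w a (some none) (some L, f) =
      if L.ini = true ∧ (∀ i, f i ≠ none) then
        some (some (L.right, L.fin, L.final,
          fun i => {q | ∃ p ∈ L.initial, (p, f i, q) ∈ L.trans},
          fun i => decide (f i = none)))
      else none := rfl

open Classical in
theorem oddStep_run (st : Set (Fin w) × Bool × Set (Fin w) × (Fin a → Set (Fin w)) × (Fin a → Bool))
    (L : Layer σ w) (f : Fin a → Option σ) :
    oddStep σ w a (some (some st)) (some L, f) =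
      if st.2.1 = false ∧ L.left = st.1 ∧ L.ini = false ∧
          (∀ i, st.2.2.2.2 i = true → f i = none) then
        some (some (L.right, L.fin, L.final,
          fun i => {q | ∃ p ∈ st.2.2.2.1 i, (p, f i, q) ∈ L.trans},
          fun i => decide (f i = none)))
      else none := rfl

theorem oddStep_sym_none (s : OSt w a) (f : Fin a → Option σ) :
    oddStep σ w a s (none, f) = none := rfl

theorem oddStep_dead (b : OSym σ w a) : oddStep σ w a none b = none := by
  obtain ⟨o, f⟩ := b; cases o <;> rfl

open Classical in
theorem eval_char (x : List (OSym σ w a)) (hx : x ≠ []) :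
    (oddM σ w a).eval x = if GoodW x then stW x else none := by
  induction x using List.reverseRecOn with
  | nil => exact absurd rfl hx
  | append_singleton y b ih =>
    rcases eq_or_ne y [] with rfl | hy
    · -- base case: a single symbol
      obtain ⟨o, f⟩ := b
      have hev : (oddM σ w a).eval ([] ++ [(o, f)]) = oddStep σ w a (some none) (o, f) := rfl
      rw [hev]
      cases o with
      | none =>
        rw [oddStep_sym_none, if_neg]
        intro hg
        exact hg.1 0 (by simp) (by simp [symAt])
      | some L =>
        rw [oddStep_start]
        have hlay0 : layAt ([] ++ [((some L : Option (Layer σ w)), f)]) 0 = L := rfl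
        have hGiff : GoodW ([] ++ [((some L : Option (Layer σ w)), f)]) ↔
            (L.ini = true ∧ ∀ i, f i ≠ none) := by
          constructor
          · rintro ⟨h1, h2, h3, h4, h5, h6⟩
            exact ⟨(h2 0 (by simp)).mpr rfl, fun i => h5 i⟩
          · rintro ⟨hini, hf⟩
            refine ⟨?_, ?_, ?_, ?_, ?_, ?_⟩
            · intro j hj
              simp only [List.nil_append, List.length_singleton] at hj
              have : j = 0 := by omega
              subst this
              simp
            · intro j hj
              simp only [List.nil_append, List.length_singleton] at hj
              have : j = 0 := by omega
              subst this
              simpa [show layAt [((some L : Option (Layer σ w)), f)] 0 = L from rfl] using hini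
            · intro j hj
              simp only [List.nil_append, List.length_singleton] at hj
              omega
            · intro j hj
              simp only [List.nil_append, List.length_singleton] at hj
              omega
            · intro i
              exact hf i
            · intro i j hj
              simp only [List.nil_append, List.length_singleton] at hj
              omega
        by_cases hc : L.ini = true ∧ ∀ i, f i ≠ none
        · rw [if_pos hc, if_pos (hGiff.mpr hc)]
          have hre : (fun i => ReachW ([] ++ [((some L : Option (Layer σ w)), f)]) i) =
              fun i => {q | ∃ p ∈ L.initial, (p, f i, q) ∈ L.trans} := by
            funext i
            ext q
            simp only [ReachW, Set.mem_setOf_eq, List.nil_append, List.length_singleton, hlay0]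
            constructor
            · rintro ⟨st, h1, h0, htr⟩
              refine ⟨st 0, h0, ?_⟩
              have := htr 0 (by omega)
              rwa [h1] at this
            · rintro ⟨p, hp, htr⟩
              refine ⟨fun n => if n = 0 then p else q, by simp, by simpa [show layAt [((some L : Option (Layer σ w)), f)] 0 = L from rfl] using hp, ?_⟩
              intro j hj
              have : j = 0 := by omega
              subst this
              simpa [show layAt [((some L : Option (Layer σ w)), f)] 0 = L from rfl,
                show symAt [((some L : Option (Layer σ w)), f)] 0 i = f i from rfl] using htr
          unfold stW
          simp only [List.nil_append] at hre
          have hpa : (fun i => decide (symAt [((some L : Option (Layer σ w)), f)] 0 i = none)) =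
              fun i => decide (f i = none) := rfl
          simp only [List.nil_append, List.length_singleton, Nat.sub_self,
            show layAt [((some L : Option (Layer σ w)), f)] 0 = L from rfl, hre, hpa]
        · rw [if_neg hc, if_neg (fun hg => hc (hGiff.mp hg))]
    · -- inductive step
      rw [DFA.eval_append_singleton, ih hy]
      have hstep : (oddM σ w a).step = oddStep σ w a := rfl
      rw [hstep]
      by_cases hgy : GoodW y
      · rw [if_pos hgy]
        obtain ⟨o, f⟩ := b
        cases o with
        | none =>
          rw [oddStep_sym_none, if_neg]
          intro hg
          obtain ⟨_, L, hbl, _⟩ := good_snoc_mp y (none, f) hy hg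
          simp at hbl
        | some L =>
          have hb : ((some L : Option (Layer σ w)), f).1 = some L := rfl
          have hLlast : layAt (y ++ [((some L : Option (Layer σ w)), f)]) y.length = L := by
            rw [layAt_last, hb]
          rw [stW, oddStep_run]
          by_cases hG : GuardW y ((some L : Option (Layer σ w)), f) L
          · obtain ⟨g1, g2, g3, g4⟩ := hG
            rw [if_pos ⟨g1, g2, g3, fun i hi => g4 i (of_decide_eq_true hi)⟩,
              if_pos (good_snoc_mpr y _ L hy hgy hb ⟨g1, g2, g3, g4⟩)]
            have hre : (fun i => ReachW (y ++ [((some L : Option (Layer σ w)), f)]) i) =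
                fun i => {q | ∃ p ∈ ReachW y i, (p, f i, q) ∈ L.trans} :=
              funext fun i => reach_snoc y _ L hy hb i
            unfold stW
            rw [show (y ++ [((some L : Option (Layer σ w)), f)]).length - 1 = y.length by simp,
              hLlast, hre]
            have hpa : (fun i => decide (symAt (y ++ [((some L : Option (Layer σ w)), f)])
                y.length i = none)) = fun i => decide (f i = none) := by
              funext i
              rw [symAt_last]
            rw [hpa]
          · rw [if_neg, if_neg]
            · intro hg
              obtain ⟨_, L', hbl', hG'⟩ := good_snoc_mp y _ hy hg
              rw [hb] at hbl'
              cases hbl'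
              exact hG hG'
            · rintro ⟨g1, g2, g3, g4⟩
              exact hG ⟨g1, g2, g3, fun i hi => g4 i (decide_eq_true hi)⟩
      · rw [if_neg hgy, oddStep_dead, if_neg]
        intro hg
        exact hgy (good_snoc_mp y b hy hg).1

theorem red_nil {γ : Type} : ∀ l : List (Option γ),
    (∀ j, (hj : j < l.length) → l[j] = none) → l.reduceOption = []
  | [], _ => rfl
  | o :: t, h => by
    have h0 : o = none := h 0 (by simp)
    subst h0
    rw [List.reduceOption_cons_of_none]
    exact red_nil t (fun j hj => by
      have := h (j + 1) (by simpa using Nat.succ_lt_succ hj)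
      simpa using this)

theorem opt_prefix {γ : Type} : ∀ l : List (Option γ),
    (∀ j, (hj : j + 1 < l.length) → l[j] = none → l[j + 1] = none) →
    ∀ j, (hj : j < l.length) → l[j] = l.reduceOption[j]?
  | [], _, j, hj => by simp at hj
  | none :: t, h, j, hj => by
    have hall : ∀ j, (hj : j < (none :: t : List (Option γ)).length) →
        (none :: t : List (Option γ))[j] = none := by
      intro j hj
      induction j with
      | zero => rfl
      | succ k ih => exact h k hj (ih (by omega))
    rw [red_nil _ hall]
    simpa using hall j hj
  | some v :: t, h, j, hj => by
    rw [List.reduceOption_cons_of_some]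
    cases j with
    | zero => simp
    | succ k =>
      have ht := opt_prefix t (fun j hj' hnone => by
        have := h (j + 1) (by simpa using Nat.succ_lt_succ hj') (by simpa using hnone)
        simpa using this) k (by simpa using hj)
      simpa using ht

theorem accepts_iff (x : List (OSym σ w a)) :
    x ∈ (oddM σ w a).accepts ↔
      ∃ p : List (Layer σ w) × (Fin a → List σ),
        (IsODD p.1 ∧ ∀ i, p.2 i ∈ OddLang p.1) ∧ conv1a p.1 p.2 = x := by
  rw [DFA.mem_accepts]
  constructor
  · intro hacc
    have hx : x ≠ [] := by
      rintro rfl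
      exact (hacc : False).elim
    rw [eval_char x hx] at hacc
    by_cases hg : GoodW x
    swap
    · rw [if_neg hg] at hacc
      exact (hacc : False).elim
    rw [if_pos hg] at hacc
    have hacc' : (layAt x (x.length - 1)).fin = true ∧
        ∀ i, ∃ q ∈ ReachW x i, q ∈ (layAt x (x.length - 1)).final := hacc
    obtain ⟨h1, h2, h3, h4, h5, h6⟩ := hg
    have hxl : 0 < x.length := List.length_pos_iff.mpr hx
    have hsymAt : ∀ j (hj : j < x.length) (i : Fin a), symAt x j i = (x[j]'hj).2 i := by
      intro j hj i
      simp [symAt, List.getElem?_eq_getElem hj]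
    have hlayAt : ∀ j (hj : j < x.length), layAt x j = (x[j]'hj).1.iget := by
      intro j hj
      simp [layAt, List.getElem?_eq_getElem hj]
    have hxj1 : ∀ j (hj : j < x.length), (x[j]'hj).1 = some (layAt x j) := by
      intro j hj
      have hne : (x[j]'hj).1 ≠ none := by
        have := h1 j hj
        rwa [List.getElem?_eq_getElem hj] at this
      rw [hlayAt j hj]
      cases hb : (x[j]'hj).1 with
      | none => exact absurd hb hne
      | some L => rfl
    set D : List (Layer σ w) := x.map (fun b => b.1.iget) with hDdef
    set vs : Fin a → List σ := fun i => (x.map (fun b => b.2 i)).reduceOption with hvsdef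
    have hDlen : D.length = x.length := by simp [hDdef]
    have hDget : ∀ j (hj : j < x.length), D[j]'(by omega) = layAt x j := by
      intro j hj
      simp [hDdef, hlayAt j hj]
    have hsym : ∀ (i : Fin a) j (hj : j < x.length), symAt x j i = (vs i)[j]? := by
      intro i j hj
      have hmono : ∀ k, (hk : k + 1 < (x.map (fun b => b.2 i)).length) →
          (x.map (fun b => b.2 i))[k] = none → (x.map (fun b => b.2 i))[k + 1] = none := by
        intro k hk hnone
        rw [List.getElem_map] at hnone ⊢
        have hk' : k + 1 < x.length := by simpa using hk
        have := h6 i k hk'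
        rw [hsymAt k (by omega) i, hsymAt (k + 1) hk' i] at this
        exact this hnone
      have := opt_prefix (x.map (fun b => b.2 i)) hmono j (by simpa using hj)
      rw [List.getElem_map] at this
      rw [hsymAt j hj i, this]
    have hvslen : ∀ i, (vs i).length ≤ x.length := by
      intro i
      calc (vs i).length ≤ (x.map (fun b => b.2 i)).length := List.reduceOption_length_le _
        _ = x.length := by simp
    have hvsne : ∀ i, vs i ≠ [] := by
      intro i hnil
      have h0 := h5 i
      rw [hsym i 0 hxl, hnil] at h0
      simp at h0
    refine ⟨(D, vs), ⟨⟨?_, ?_, ?_⟩, ?_⟩, ?_⟩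
    · simpa [hDdef] using hx
    · dsimp only
      intro i hi
      rw [hDget (i + 1) (by omega), hDget i (by omega)]
      exact h4 i (by omega)
    · dsimp only
      intro i hi
      constructor
      · rw [hDget i (by omega)]
        exact h2 i (by omega)
      · rw [hDget i (by omega), hDlen]
        constructor
        · intro hfin
          by_contra hne
          have hi' : i + 1 < x.length := by omega
          rw [h3 i hi'] at hfin
          cases hfin
        · intro hie
          subst hie
          exact hacc'.1
    · dsimp only
      intro i
      obtain ⟨q, ⟨st, hstq, hst0, hsttr⟩, hqfin⟩ := hacc'.2 i
      refine ⟨hvsne i, by rw [hDlen]; exact hvslen i, st, ?_, ?_⟩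
      · intro j hj
        rw [hDget j (by omega), ← hsym i j (by omega)]
        exact hsttr j (by omega)
      · intro h0
        refine ⟨by rw [hDget 0 hxl]; exact hst0, ?_⟩
        rw [hDget (D.length - 1) (by omega), hDlen, hstq]
        exact hqfin
    · have hN : max D.length (Finset.univ.sup fun i => (vs i).length) = x.length := by
        rw [hDlen]
        exact max_eq_left (Finset.sup_le fun i _ => hvslen i)
      show conv1a D vs = x
      unfold conv1a
      apply List.ext_getElem
      · simp [hN]
      · intro j h1' h2'
        rw [List.getElem_ofFn]
        refine Prod.ext ?_ ?_
        · show D[(j : ℕ)]? = (x[j]'h2').1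
          rw [List.getElem?_eq_getElem (by omega), hDget j h2', hxj1 j h2']
        · funext i
          show (vs i)[(j : ℕ)]? = (x[j]'h2').2 i
          rw [← hsym i j h2', hsymAt j h2' i]
  · rintro ⟨⟨D, vs⟩, ⟨hD, hvs⟩, rfl⟩
    dsimp only at hD hvs ⊢
    obtain ⟨hDne, hfront, hflags⟩ := hD
    have hDl : 0 < D.length := List.length_pos_iff.mpr hDne
    have hvslen : ∀ i, (vs i).length ≤ D.length := fun i => (hvs i).2.1
    have hN : max D.length (Finset.univ.sup fun i => (vs i).length) = D.length :=
      max_eq_left (Finset.sup_le fun i _ => hvslen i)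
    have hxlen : (conv1a D vs).length = D.length := by simp [conv1a, hN]
    have hlay : ∀ j (hj : j < D.length), layAt (conv1a D vs) j = D[j]'hj := by
      intro j hj
      rw [layAt, List.getElem?_eq_getElem (by rw [hxlen]; exact hj)]
      simp [conv1a, List.getElem_ofFn, List.getElem?_eq_getElem hj]
    have hsym : ∀ j (hj : j < D.length) (i : Fin a), symAt (conv1a D vs) j i = (vs i)[j]? := by
      intro j hj i
      rw [symAt, List.getElem?_eq_getElem (by rw [hxlen]; exact hj)]
      simp [conv1a, List.getElem_ofFn]
    have hxne : conv1a D vs ≠ [] := by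
      intro h
      rw [h] at hxlen
      simp at hxlen
      omega
    have hgood : GoodW (conv1a D vs) := by
      refine ⟨?_, ?_, ?_, ?_, ?_, ?_⟩
      · intro j hj
        rw [hxlen] at hj
        rw [List.getElem?_eq_getElem (by rw [hxlen]; exact hj)]
        simp [conv1a, List.getElem_ofFn, List.getElem?_eq_getElem hj]
      · intro j hj
        rw [hxlen] at hj
        rw [hlay j hj]
        exact (hflags j hj).1
      · intro j hj
        rw [hxlen] at hj
        rw [hlay j (by omega)]
        have hiff := (hflags j (by omega)).2
        cases hfj : (D[j]'(by omega)).fin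
        · rfl
        · exact absurd (hiff.mp hfj) (by omega)
      · intro j hj
        rw [hxlen] at hj
        rw [hlay (j + 1) hj, hlay j (by omega)]
        exact hfront j hj
      · intro i
        rw [hsym 0 hDl i]
        have hp : 0 < (vs i).length := List.length_pos_iff.mpr (hvs i).1
        rw [List.getElem?_eq_getElem hp]
        simp
      · intro i j hj hnone
        rw [hxlen] at hj
        rw [hsym j (by omega) i] at hnone
        rw [hsym (j + 1) hj i]
        rw [List.getElem?_eq_none_iff] at hnone ⊢
        omega
    rw [eval_char _ hxne, if_pos hgood]
    show oddAcc w a (stW (conv1a D vs))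
    refine ⟨?_, ?_⟩
    · show (layAt (conv1a D vs) ((conv1a D vs).length - 1)).fin = true
      rw [hxlen, hlay (D.length - 1) (by omega)]
      exact (hflags (D.length - 1) (by omega)).2.mpr rfl
    · intro i
      obtain ⟨hne, hlen, st, htr, hif⟩ := hvs i
      obtain ⟨hini, hfin⟩ := hif hDl
      refine ⟨st D.length, ⟨st, by rw [hxlen], ?_, ?_⟩, ?_⟩
      · rw [hlay 0 hDl]
        exact hini
      · intro j hj
        rw [hxlen] at hj
        rw [hlay j hj, hsym j hj i]
        exact htr j hj
      · show st D.length ∈ (layAt (conv1a D vs) ((conv1a D vs).length - 1)).final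
        rw [hxlen, hlay (D.length - 1) (by omega)]
        exact hfin

end OddDFAProof

/-- The `(a+1)`-ary relation `{(D,s₁,…,sₐ) : D ∈ B⊕(Σ,w), s₁,…,sₐ ∈ L(D)}` is
regular. -/
theorem stmt11 (σ : Type) [Fintype σ] [Nonempty σ] (w a : ℕ) (hw : 0 < w) (ha : 0 < a) :
    Regular1a { p : List (Layer σ w) × (Fin a → List σ) |
      IsODD p.1 ∧ ∀ i, p.2 i ∈ OddLang p.1 } := by
  refine ⟨OSt w a, inferInstance, oddM σ w a, ?_⟩
  ext x
  rw [accepts_iff]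
  constructor
  · rintro ⟨p, h, rfl⟩; exact ⟨p, h, rfl⟩
  · rintro ⟨p, h, rfl⟩; exact ⟨p, h, rfl⟩
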